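/- arXiv:1408.3718 — 2 statements merged into one kernel-verified Lean document; each statement's English description precedes it below -/
import Mathlib

section
/- Let (K, v) be an Abelian unital po-group with RDP, E = Γ(K, v), and let (H, u) be an Abelian unital po-group with RDP. Then E is strong (H, u)-perfect if and only if there exists a directed Abelian po-group G such that E is isomorphic, as an interval effect algebra, to Γ(H ×ₗ G, (u, 0)). Moreover, in that case G can be chosen to satisfy RDP. -/
open Set

/-! Common vocabulary: interval effect algebras `Γ(K, v) = Set.Icc 0 v` in Abelian
po-groups (`OrderedAddCommGroup`), ideals, decompositions, states, etc., following
Dvurečenskij, "Lexicographic effect algebras". -/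

section Defs

variable {K : Type*} [AddCommGroup K] [PartialOrder K] [IsOrderedAddMonoid K]
variable {H : Type*} [AddCommGroup H] [PartialOrder H] [IsOrderedAddMonoid H]
variable {L : Type*} [AddCommGroup L] [PartialOrder L] [IsOrderedAddMonoid L]

/-- `v` is a strong unit of the po-group `K`. -/
def IsStrongUnit (v : K) : Prop := 0 ≤ v ∧ ∀ g : K, ∃ n : ℕ, g ≤ n • v

/-- The Riesz decomposition property for a po-group. -/
def RDP (K : Type*) [AddCommGroup K] [PartialOrder K] [IsOrderedAddMonoid K] : Prop :=
  ∀ a₁ a₂ b₁ b₂ : K, 0 ≤ a₁ → 0 ≤ a₂ → 0 ≤ b₁ → 0 ≤ b₂ → a₁ + a₂ = b₁ + b₂ →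
    ∃ c₁₁ c₁₂ c₂₁ c₂₂ : K, 0 ≤ c₁₁ ∧ 0 ≤ c₁₂ ∧ 0 ≤ c₂₁ ∧ 0 ≤ c₂₂ ∧
      a₁ = c₁₁ + c₁₂ ∧ a₂ = c₂₁ + c₂₂ ∧ b₁ = c₁₁ + c₂₁ ∧ b₂ = c₁₂ + c₂₂

/-- A poset is an antilattice if any two elements possessing a supremum or an
infimum are comparable. -/
def IsAntilattice (α : Type*) [PartialOrder α] : Prop :=
  ∀ a b : α, ((∃ c, IsLUB {a, b} c) ∨ (∃ c, IsGLB {a, b} c)) → a ≤ b ∨ b ≤ a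

/-- A po-group is directed if any two elements have a common upper bound. -/
def IsDirectedGroup (G : Type*) [AddCommGroup G] [PartialOrder G] [IsOrderedAddMonoid G] : Prop :=
  ∀ a b : G, ∃ c : G, a ≤ c ∧ b ≤ c

/-- An ideal of the interval effect algebra `Γ(K, v)`. -/
def IsIdeal (v : K) (I : Set K) : Prop :=
  I.Nonempty ∧ I ⊆ Icc 0 v ∧
  (∀ x ∈ Icc (0 : K) v, ∀ y ∈ I, x ≤ y → x ∈ I) ∧
  (∀ x ∈ I, ∀ y ∈ I, x + y ≤ v → x + y ∈ I)

/-- An effect subalgebra of `Γ(K, v)`. -/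
def IsEffectSubalgebra (v : K) (F : Set K) : Prop :=
  F ⊆ Icc 0 v ∧ v ∈ F ∧ (∀ x ∈ F, v - x ∈ F) ∧
  ∀ x ∈ F, ∀ y ∈ F, x + y ≤ v → x + y ∈ F

/-- The relation `x ∼_I y`. -/
def SimI (I : Set K) (x y : K) : Prop :=
  ∃ e ∈ I, ∃ f ∈ I, e ≤ x ∧ f ≤ y ∧ x - e = y - f

/-- `x/I ≤ y/I` in the quotient. -/
def QuotLE (v : K) (I : Set K) (x y : K) : Prop :=
  ∃ x₁ ∈ Icc (0 : K) v, SimI I x₁ x ∧ x₁ ≤ y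

/-- `x/I < y/I` in the quotient. -/
def QuotLT (v : K) (I : Set K) (x y : K) : Prop :=
  QuotLE v I x y ∧ ¬ SimI I x y

/-- A strict ideal. -/
def IsStrictIdeal (v : K) (I : Set K) : Prop :=
  IsIdeal v I ∧ ∀ x ∈ Icc (0 : K) v, ∀ y ∈ Icc (0 : K) v, QuotLT v I x y → x < y

/-- The ideal `I₀(a)` of `Γ(K, v)` generated by `a`: all finite sums of elements below `a`. -/
def IdealGen (v a : K) : Set K :=
  {x | x ∈ Icc 0 v ∧ ∃ l : List K, l ≠ [] ∧ (∀ b ∈ l, b ∈ Icc 0 v ∧ b ≤ a) ∧ l.sum = x}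

/-- A prime ideal. -/
def IsPrimeIdeal (v : K) (I : Set K) : Prop :=
  IsIdeal v I ∧
  ∀ x ∈ Icc (0 : K) v, ∀ y ∈ Icc (0 : K) v, IdealGen v x ∩ IdealGen v y ⊆ I → x ∈ I ∨ y ∈ I

/-- A retractive ideal: the canonical projection onto the quotient has a right inverse,
encoded by a map `r : E → E` constant on `∼_I`-classes. -/
def IsRetractiveIdeal (v : K) (I : Set K) : Prop :=
  IsIdeal v I ∧ ∃ r : K → K,
    (∀ x ∈ Icc (0 : K) v, r x ∈ Icc (0 : K) v) ∧ r v = v ∧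
    (∀ x ∈ Icc (0 : K) v, ∀ y ∈ Icc (0 : K) v, x + y ≤ v → r (x + y) = r x + r y) ∧
    (∀ x ∈ Icc (0 : K) v, SimI I (r x) x) ∧
    (∀ x ∈ Icc (0 : K) v, ∀ y ∈ Icc (0 : K) v, SimI I x y → r x = r y)

/-- A lexicographic ideal: a nontrivial ideal that is strict, retractive and prime. -/
def IsLexIdeal (v : K) (I : Set K) : Prop :=
  IsIdeal v I ∧ I ≠ {0} ∧ I ≠ Icc 0 v ∧
    IsStrictIdeal v I ∧ IsRetractiveIdeal v I ∧ IsPrimeIdeal v I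

/-- The set of infinitesimal elements of `Γ(K, v)`. -/
def Infin (v : K) : Set K := {x | x ∈ Icc 0 v ∧ ∀ n : ℕ, n • x ≤ v}

/-- A maximal ideal. -/
def IsMaximalIdeal (v : K) (I : Set K) : Prop :=
  IsIdeal v I ∧ I ≠ Icc 0 v ∧ ∀ J : Set K, IsIdeal v J → I ⊂ J → J = Icc 0 v

/-- A local effect algebra: exactly one maximal ideal. -/
def IsLocal (v : K) : Prop := ∃! I : Set K, IsMaximalIdeal v I

/-- The radical: the intersection of all maximal ideals. -/
def Rad (v : K) : Set K := ⋂₀ {I : Set K | IsMaximalIdeal v I}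

/-- A Riesz ideal. -/
def IsRieszIdeal (v : K) (I : Set K) : Prop :=
  IsIdeal v I ∧ ∀ i ∈ I, ∀ a ∈ Icc (0 : K) v, ∀ b ∈ Icc (0 : K) v, a + b ≤ v → i ≤ a + b →
    ∃ ia ∈ I, ∃ ib ∈ I, ia ≤ a ∧ ib ≤ b ∧ ia + ib ≤ v ∧ i ≤ ia + ib

/-- A (real-valued) state on `Γ(K, v)`. -/
def IsState (v : K) (s : K → ℝ) : Prop :=
  (∀ x ∈ Icc (0 : K) v, s x ∈ Icc (0 : ℝ) 1) ∧ s v = 1 ∧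
  ∀ x ∈ Icc (0 : K) v, ∀ y ∈ Icc (0 : K) v, x + y ≤ v → s (x + y) = s x + s y

/-- `Γ(K, v)` has exactly one state (uniqueness meaning: any two states agree on `Γ(K, v)`). -/
def HasUniqueState (v : K) : Prop :=
  (∃ s : K → ℝ, IsState v s) ∧
  ∀ s s' : K → ℝ, IsState v s → IsState v s' → ∀ x ∈ Icc (0 : K) v, s x = s' x

/-- An `(H, u)`-decomposition of `Γ(K, v)`. -/
def IsDecomp (v : K) (u : H) (E : H → Set K) : Prop :=
  (∀ t ∈ Icc (0 : H) u, (E t).Nonempty) ∧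
  (∀ s ∈ Icc (0 : H) u, ∀ t ∈ Icc (0 : H) u, s ≠ t → E s ∩ E t = ∅) ∧
  (⋃ t ∈ Icc (0 : H) u, E t) = Icc 0 v ∧
  (∀ t ∈ Icc (0 : H) u, (fun x => v - x) '' E t = E (u - t)) ∧
  (∀ s ∈ Icc (0 : H) u, ∀ t ∈ Icc (0 : H) u, ∀ x ∈ E s, ∀ y ∈ E t, x + y ≤ v →
    s + t ≤ u ∧ x + y ∈ E (s + t))

/-- An ordered `(H, u)`-decomposition. -/
def IsOrderedDecomp (v : K) (u : H) (E : H → Set K) : Prop :=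
  IsDecomp v u E ∧
  ∀ s ∈ Icc (0 : H) u, ∀ t ∈ Icc (0 : H) u, s < t → ∀ x ∈ E s, ∀ y ∈ E t, x < y

/-- A directed `(H, u)`-decomposition. -/
def IsDirectedDecomp (v : K) (u : H) (E : H → Set K) : Prop :=
  IsDecomp v u E ∧
  ∀ t ∈ Icc (0 : H) u,
    (∀ x ∈ E t, ∀ y ∈ E t, ∃ z ∈ E t, x ≤ z ∧ y ≤ z) ∧
    (∀ x ∈ E t, ∀ y ∈ E t, ∃ z ∈ E t, z ≤ x ∧ z ≤ y)

/-- A strong `(H, u)`-decomposition, with witnessing elements `c t ∈ E t`. -/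
def IsStrongDecomp (v : K) (u : H) (E : H → Set K) (c : H → K) : Prop :=
  IsOrderedDecomp v u E ∧ IsDirectedDecomp v u E ∧
  (∀ t ∈ Icc (0 : H) u, c t ∈ E t) ∧
  (∀ s ∈ Icc (0 : H) u, ∀ t ∈ Icc (0 : H) u, s + t ≤ u → c (s + t) = c s + c t) ∧
  c u = v

/-- A strong `(H, u)`-perfect effect algebra. -/
def IsStrongPerfect (v : K) (u : H) : Prop :=
  ∃ (E : H → Set K) (c : H → K), IsStrongDecomp v u E c

/-- A homomorphism of interval effect algebras `Γ(K, v) → Γ(L, w)`. -/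
def IsEffectHom (v : K) (w : L) (f : K → L) : Prop :=
  (∀ x ∈ Icc (0 : K) v, f x ∈ Icc (0 : L) w) ∧ f v = w ∧
  ∀ x ∈ Icc (0 : K) v, ∀ y ∈ Icc (0 : K) v, x + y ≤ v →
    f x + f y ≤ w ∧ f (x + y) = f x + f y

/-- An isomorphism of interval effect algebras `Γ(K, v) ≅ Γ(L, w)`. -/
def IsEffectIso (v : K) (w : L) (f : K → L) : Prop :=
  IsEffectHom v w f ∧ ∃ g : L → K, IsEffectHom w v g ∧
    (∀ x ∈ Icc (0 : K) v, g (f x) = x) ∧ (∀ y ∈ Icc (0 : L) w, f (g y) = y)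

/-- An o-ideal of a po-group: a directed convex subgroup. -/
def IsOIdeal (H : Type*) [AddCommGroup H] [PartialOrder H] [IsOrderedAddMonoid H] (S : AddSubgroup H) : Prop :=
  (∀ a ∈ S, ∀ b ∈ S, ∃ c ∈ S, a ≤ c ∧ b ≤ c) ∧
  (∀ a ∈ S, ∀ b ∈ S, ∀ x : H, a ≤ x → x ≤ b → x ∈ S)

/-- A simple po-group: the only o-ideals are `⊥` and `⊤`. -/
def IsSimplePoGroup (H : Type*) [AddCommGroup H] [PartialOrder H] [IsOrderedAddMonoid H] : Prop :=
  ∀ S : AddSubgroup H, IsOIdeal H S → S = ⊥ ∨ S = ⊤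

/-- `Γ(H, u)` is Archimedean: its only infinitesimal element is `0`. -/
def GammaArchimedean (u : H) : Prop :=
  ∀ t ∈ Icc (0 : H) u, (∀ n : ℕ, n • t ≤ u) → t = 0

/-- `φ : K → H` witnesses an isomorphism of the quotient effect algebra `Γ(K,v)/I`
onto `Γ(H, u)`: it is an additive surjection onto `[0,u]` whose fibers on `Γ(K,v)`
are exactly the `∼_I`-classes, and it transports the quotient order. -/
def QuotIsoWitness (v : K) (I : Set K) (u : H) (φ : K → H) : Prop :=
  (∀ x ∈ Icc (0 : K) v, φ x ∈ Icc (0 : H) u) ∧ φ v = u ∧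
  (∀ x ∈ Icc (0 : K) v, ∀ y ∈ Icc (0 : K) v, x + y ≤ v → φ (x + y) = φ x + φ y) ∧
  (∀ t ∈ Icc (0 : H) u, ∃ x ∈ Icc (0 : K) v, φ x = t) ∧
  (∀ x ∈ Icc (0 : K) v, ∀ y ∈ Icc (0 : K) v, (φ x = φ y ↔ SimI I x y)) ∧
  (∀ x ∈ Icc (0 : K) v, ∀ y ∈ Icc (0 : K) v, (φ x ≤ φ y ↔ QuotLE v I x y))

/-- The quotient effect algebra `Γ(K,v)/I` is isomorphic to `Γ(H, u)`. -/
def IsQuotIso (v : K) (I : Set K) (u : H) : Prop :=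
  ∃ φ : K → H, QuotIsoWitness v I u φ

/-- The sub-effect algebra with carrier `S ⊆ Γ(K, v)` and unit `v` is isomorphic
to the interval effect algebra `Γ(L, w)`. -/
def IsSubalgebraIso (v : K) (S : Set K) (w : L) : Prop :=
  ∃ f : K → L,
    (∀ x ∈ S, f x ∈ Icc (0 : L) w) ∧ f v = w ∧
    (∀ x ∈ S, ∀ y ∈ S, x + y ≤ v → f x + f y ≤ w ∧ f (x + y) = f x + f y) ∧
    ∃ g : L → K,
      (∀ a ∈ Icc (0 : L) w, g a ∈ S) ∧ g w = v ∧
      (∀ a ∈ Icc (0 : L) w, ∀ b ∈ Icc (0 : L) w, a + b ≤ w →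
        g a + g b ≤ v ∧ g (a + b) = g a + g b) ∧
      (∀ x ∈ S, g (f x) = x) ∧ (∀ a ∈ Icc (0 : L) w, f (g a) = a)

/-- An `(H, u)`-valued state on `Γ(K, v)`, as a map of subtypes. -/
def IsSubValuedState (v : K) (u : H) (s : Icc (0 : K) v → Icc (0 : H) u) : Prop :=
  (∀ x : Icc (0 : K) v, (x : K) = v → ((s x : H) = u)) ∧
  (∀ x y z : Icc (0 : K) v, (z : K) = (x : K) + (y : K) →
    ((s z : H) = (s x : H) + (s y : H))) ∧
  Function.Surjective s

/-- An `(H, u)`-decomposition of `Γ(K, v)`, as a family indexed by the subtype `[0,u]`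
of sets of the subtype `Γ(K, v)`. -/
def IsSubDecomp (v : K) (u : H) (E : Icc (0 : H) u → Set (Icc (0 : K) v)) : Prop :=
  (∀ t, (E t).Nonempty) ∧
  (∀ s t : Icc (0 : H) u, s ≠ t → E s ∩ E t = ∅) ∧
  (⋃ t, E t) = Set.univ ∧
  (∀ t t' : Icc (0 : H) u, (t' : H) = u - t →
    ∀ x x' : Icc (0 : K) v, (x' : K) = v - x → (x ∈ E t ↔ x' ∈ E t')) ∧
  (∀ s t : Icc (0 : H) u, ∀ x y z : Icc (0 : K) v, x ∈ E s → y ∈ E t →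
    (z : K) = (x : K) + (y : K) →
    ∃ w : Icc (0 : H) u, (w : H) = (s : H) + (t : H) ∧ z ∈ E w)

end Defs

universe x y

/-!
If `(E_t, c_t)` is a strong `(H, u)`-decomposition of `Γ(K, v)`, then `E_0` is closed under
addition and downward closed in `K⁺`, hence it is the positive cone of the subgroup `G` of `K`
that it generates; `G` is directed, and being convex it inherits RDP from `K`. Each `E_t` is the
part of the coset `c_t + G` allowed by the lexicographic bounds, i.e. `c_t + g ∈ E_t` iff
`(t, g) ∈ [0, (u, 0)]`, so `(t, g) ↦ c_t + g` is an isomorphism `Γ(H ×ₗ G, (u, 0)) ≅ Γ(K, v)`.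
Conversely, the first coordinate splits `Γ(H ×ₗ G, (u, 0))` into a strong decomposition with
`c_t = (t, 0)`, and strong decompositions pull back along isomorphisms.
-/

section EffectHom

variable {K : Type*} [AddCommGroup K] [PartialOrder K] [IsOrderedAddMonoid K]
  {L : Type*} [AddCommGroup L] [PartialOrder L] {v : K} {w : L}

theorem IsEffectHom.of_map_add {f : K → L} (hmaps : MapsTo f (Icc 0 v) (Icc 0 w)) (hv : f v = w)
    (hadd : ∀ x ∈ Icc (0 : K) v, ∀ y ∈ Icc (0 : K) v, x + y ≤ v → f (x + y) = f x + f y) :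
    IsEffectHom v w f :=
  ⟨hmaps, hv, fun x hx y hy hxy =>
    ⟨hadd x hx y hy hxy ▸ (hmaps ⟨add_nonneg hx.1 hy.1, hxy⟩).2, hadd x hx y hy hxy⟩⟩

theorem IsEffectHom.map_add_sub {f : K → L} (hf : IsEffectHom v w f) {x y : K}
    (hx : x ∈ Icc 0 v) (hy : y ∈ Icc 0 v) (hxy : x ≤ y) : f y = f x + f (y - x) := by
  have hyx : y - x ∈ Icc (0 : K) v := ⟨sub_nonneg.2 hxy, (sub_le_self _ hx.1).trans hy.2⟩
  have := (hf.2.2 x hx (y - x) hyx (by rw [add_sub_cancel]; exact hy.2)).2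
  rwa [add_sub_cancel] at this

theorem IsEffectHom.monotoneOn [IsOrderedAddMonoid L] {f : K → L} (hf : IsEffectHom v w f) :
    MonotoneOn f (Icc 0 v) :=
  fun _ hx _ hy hxy => hf.map_add_sub hx hy hxy ▸
    le_add_of_nonneg_right (hf.1 _ ⟨sub_nonneg.2 hxy, (sub_le_self _ hx.1).trans hy.2⟩).1

theorem IsEffectHom.map_sub {f : K → L} (hf : IsEffectHom v w f) {x : K} (hx : x ∈ Icc 0 v) :
    f (v - x) = w - f x := by
  rw [← hf.2.1, hf.map_add_sub hx ⟨hx.1.trans hx.2, le_rfl⟩ hx.2, add_sub_cancel_left]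

theorem IsEffectHom.isEffectIso_invFunOn [IsOrderedAddMonoid L] {g : L → K}
    (hg : IsEffectHom w v g) (hw : 0 ≤ w) (hbij : BijOn g (Icc 0 w) (Icc 0 v))
    (hdef : ∀ p ∈ Icc (0 : L) w, ∀ q ∈ Icc (0 : L) w, g p + g q ≤ v → p + q ≤ w) :
    IsEffectIso v w (Function.invFunOn g (Icc 0 w)) := by
  have : Nonempty L := ⟨w⟩
  set f := Function.invFunOn g (Icc 0 w)
  obtain ⟨hfg, hgf⟩ := hbij.invOn_invFunOn
  have hmaps : MapsTo f (Icc 0 v) (Icc 0 w) := hbij.surjOn.mapsTo_invFunOn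
  refine ⟨.of_map_add hmaps ?_ ?_, g, hg, hgf, hfg⟩
  · rw [← hg.2.1]
    exact hfg ⟨hw, le_rfl⟩
  · intro x hx y hy hxy
    have hpq : f x + f y ≤ w := hdef _ (hmaps hx) _ (hmaps hy) (by rwa [hgf hx, hgf hy])
    have hsum := (hg.2.2 _ (hmaps hx) _ (hmaps hy) hpq).2
    rw [hgf hx, hgf hy] at hsum
    rw [← hsum]
    exact hfg ⟨add_nonneg (hmaps hx).1 (hmaps hy).1, hpq⟩

end EffectHom

theorem Prod.Lex.mem_Icc_zero_toLex_iff {H G : Type*} [PartialOrder H] [Zero H] [Preorder G]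
    [Zero G] {u : H} {p : H ×ₗ G} :
    p ∈ Icc 0 (toLex (u, 0)) ↔ (ofLex p).1 ∈ Icc 0 u ∧
      ((ofLex p).1 = 0 → 0 ≤ (ofLex p).2) ∧ ((ofLex p).1 = u → (ofLex p).2 ≤ 0) := by
  rw [mem_Icc, Prod.Lex.le_iff, Prod.Lex.le_iff]
  obtain ⟨t, g⟩ := ofLex p
  change (0 < t ∨ 0 = t ∧ 0 ≤ g) ∧ (t < u ∨ t = u ∧ g ≤ 0) ↔ _
  constructor
  · rintro ⟨h0 | ⟨rfl, hg⟩, hu | ⟨rfl, hg'⟩⟩ <;>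
      simp_all [le_of_lt, ne_of_gt, ne_of_lt]
  · rintro ⟨⟨h0, hu⟩, hg0, hgu⟩
    exact ⟨h0.lt_or_eq.imp_right fun h => ⟨h, hg0 h.symm⟩,
      hu.lt_or_eq.imp_right fun h => ⟨h, hgu h⟩⟩

section Decomposition

variable {K : Type*} [AddCommGroup K] [PartialOrder K]
  {H : Type*} [AddCommGroup H] [PartialOrder H]
  {v : K} {u : H} {E : H → Set K} {c : H → K} {s t : H} {x y : K}

namespace IsDecomp

variable (hE : IsDecomp v u E)
include hE

theorem mem_Icc (ht : t ∈ Icc 0 u) (hx : x ∈ E t) : x ∈ Icc 0 v :=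
  hE.2.2.1 ▸ mem_biUnion ht hx

theorem exists_mem (hx : x ∈ Icc 0 v) : ∃ t ∈ Icc 0 u, x ∈ E t := by
  rw [← hE.2.2.1] at hx
  simpa using hx

theorem eq_of_mem (hs : s ∈ Icc 0 u) (ht : t ∈ Icc 0 u) (hxs : x ∈ E s) (hxt : x ∈ E t) :
    s = t := by
  by_contra hst
  exact (hE.2.1 s hs t ht hst).subset ⟨hxs, hxt⟩

theorem sub_mem_sub (ht : t ∈ Icc 0 u) (hx : x ∈ E t) : v - x ∈ E (u - t) :=
  hE.2.2.2.1 t ht ▸ mem_image_of_mem _ hx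

variable [IsOrderedAddMonoid H]

theorem add_mem (hs : s ∈ Icc 0 u) (ht : t ∈ Icc 0 u) (hx : x ∈ E s) (hy : y ∈ E t)
    (hxy : x + y ≤ v) : s + t ∈ Icc 0 u ∧ x + y ∈ E (s + t) :=
  have h := hE.2.2.2.2 s hs t ht x hx y hy hxy
  ⟨⟨add_nonneg hs.1 ht.1, h.1⟩, h.2⟩

theorem add_index_eq {r : H} (hs : s ∈ Icc 0 u) (ht : t ∈ Icc 0 u) (hr : r ∈ Icc 0 u)
    (hx : x ∈ E s) (hy : y ∈ E t) (hxy : x + y ∈ E r) : s + t = r :=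
  have h := hE.add_mem hs ht hx hy (hE.mem_Icc hr hxy).2
  hE.eq_of_mem h.1 hr h.2 hxy

theorem add_mem_of_mem_zero (hu : 0 ≤ u) (ht : t ∈ Icc 0 u) (hx : x ∈ E t) (hy : y ∈ E 0)
    (hxy : x + y ≤ v) : x + y ∈ E t := by
  simpa using (hE.add_mem ht ⟨le_rfl, hu⟩ hx hy hxy).2

variable [IsOrderedAddMonoid K]

theorem sub_mem_zero (ht : t ∈ Icc 0 u) (hx : x ∈ E t) (hy : y ∈ E t) (hyx : y ≤ x) :
    x - y ∈ E 0 := by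
  obtain ⟨s, hs, hxy⟩ := hE.exists_mem
    ⟨sub_nonneg.2 hyx, (sub_le_self _ (hE.mem_Icc ht hy).1).trans (hE.mem_Icc ht hx).2⟩
  have := hE.add_index_eq ht hs ht hy hxy (by rwa [add_sub_cancel])
  rwa [add_eq_left.1 this] at hxy

theorem mem_zero_of_le (hu : 0 ≤ u) {a b : K} (ha : 0 ≤ a) (hab : a ≤ b) (hb : b ∈ E 0) :
    a ∈ E 0 := by
  have hbv := (hE.mem_Icc ⟨le_rfl, hu⟩ hb).2
  obtain ⟨s, hs, has⟩ := hE.exists_mem ⟨ha, hab.trans hbv⟩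
  obtain ⟨s', hs', hbas⟩ := hE.exists_mem ⟨sub_nonneg.2 hab, (sub_le_self _ ha).trans hbv⟩
  have := hE.add_index_eq hs hs' ⟨le_rfl, hu⟩ has hbas (by rwa [add_sub_cancel])
  rwa [le_antisymm (this ▸ le_add_of_nonneg_right hs'.1) hs.1] at has

end IsDecomp

theorem IsDecomp.isStrongDecomp [IsOrderedAddMonoid K] [IsOrderedAddMonoid H]
    (hE : IsDecomp v u E)
    (hord : ∀ s ∈ Icc (0 : H) u, ∀ t ∈ Icc (0 : H) u, s < t → ∀ x ∈ E s, ∀ y ∈ E t, x < y)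
    (hup : ∀ t ∈ Icc (0 : H) u, ∀ x ∈ E t, ∀ y ∈ E t, ∃ z ∈ E t, x ≤ z ∧ y ≤ z)
    (hc : ∀ t ∈ Icc (0 : H) u, c t ∈ E t)
    (hcadd : ∀ s ∈ Icc (0 : H) u, ∀ t ∈ Icc (0 : H) u, s + t ≤ u → c (s + t) = c s + c t)
    (hcu : c u = v) : IsStrongDecomp v u E c := by
  refine ⟨⟨hE, hord⟩, ⟨hE, fun t ht => ⟨hup t ht, fun x hx y hy => ?_⟩⟩, hc, hcadd, hcu⟩
  -- `x ↦ v - x` maps `E t` antitonically onto `E (u - t)`, so lower bounds come from upper ones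
  have hut : u - t ∈ Icc 0 u := sub_mem_Icc_zero_iff_right.2 ht
  obtain ⟨z, hz, hxz, hyz⟩ := hup _ hut _ (hE.sub_mem_sub ht hx) _ (hE.sub_mem_sub ht hy)
  have hvz := hE.sub_mem_sub hut hz
  rw [sub_sub_cancel] at hvz
  exact ⟨v - z, hvz, sub_le_comm.1 hxz, sub_le_comm.1 hyz⟩

end Decomposition

theorem AddSubgroup.exists_sub_of_mem_closure {G : Type*} [AddCommGroup G] {P : Set G}
    (h0 : 0 ∈ P) (hadd : ∀ a ∈ P, ∀ b ∈ P, a + b ∈ P) {a : G} (ha : a ∈ closure P) :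
    ∃ p ∈ P, ∃ q ∈ P, a = p - q := by
  induction ha using AddSubgroup.closure_induction with
  | mem a ha => exact ⟨a, ha, 0, h0, (sub_zero a).symm⟩
  | zero => exact ⟨0, h0, 0, h0, (sub_zero 0).symm⟩
  | add a b _ _ iha ihb =>
    obtain ⟨p, hp, q, hq, rfl⟩ := iha
    obtain ⟨p', hp', q', hq', rfl⟩ := ihb
    exact ⟨p + p', hadd p hp p' hp', q + q', hadd q hq q' hq',
      (add_sub_add_comm p p' q q').symm⟩
  | neg a _ iha =>
    obtain ⟨p, hp, q, hq, rfl⟩ := iha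
    exact ⟨q, hq, p, hp, neg_sub p q⟩

section StrongDecomposition

variable {K : Type*} [AddCommGroup K] [PartialOrder K] [IsOrderedAddMonoid K]
  {H : Type*} [AddCommGroup H] [PartialOrder H] [IsOrderedAddMonoid H]
  {v : K} {u : H} {E : H → Set K} {c : H → K} {t : H} {x y : K}

namespace IsOrderedDecomp

variable (hE : IsOrderedDecomp v u E)
include hE

theorem add_mem_of_lt (ht : t ∈ Icc 0 u) (htu : t < u) (hx : x ∈ E t) (hy : y ∈ E 0) :
    x + y ∈ E t := by
  have hu : 0 ≤ u := ht.1.trans htu.le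
  have hyx : y < v - x := hE.2 0 ⟨le_rfl, hu⟩ (u - t) (sub_mem_Icc_zero_iff_right.2 ht)
    (sub_pos.2 htu) y hy _ (hE.1.sub_mem_sub ht hx)
  exact hE.1.add_mem_of_mem_zero hu ht hx hy (lt_sub_iff_add_lt'.1 hyx).le

theorem sub_mem_of_pos (ht : t ∈ Icc 0 u) (h0t : 0 < t) (hx : x ∈ E t) (hy : y ∈ E 0) :
    x - y ∈ E t := by
  have hut : u - t ∈ Icc 0 u := sub_mem_Icc_zero_iff_right.2 ht
  have := hE.1.sub_mem_sub hut
    (hE.add_mem_of_lt hut (sub_lt_self u h0t) (hE.1.sub_mem_sub ht hx) hy)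
  rwa [sub_sub_cancel, sub_add, sub_sub_cancel] at this

end IsOrderedDecomp

namespace IsStrongDecomp

variable (hE : IsStrongDecomp v u E c)
include hE

theorem sub_mem_closure (ht : t ∈ Icc 0 u) (hx : x ∈ E t) :
    x - c t ∈ AddSubgroup.closure (E 0) := by
  obtain ⟨z, hz, hzx, hzc⟩ := (hE.2.1.2 t ht).2 x hx (c t) (hE.2.2.1 t ht)
  rw [← sub_sub_sub_cancel_right x (c t) z]
  exact sub_mem (AddSubgroup.subset_closure (hE.1.1.sub_mem_zero ht hx hz hzx))
    (AddSubgroup.subset_closure (hE.1.1.sub_mem_zero ht (hE.2.2.1 t ht) hz hzc))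

variable (hu : 0 ≤ u)
include hu

omit [IsOrderedAddMonoid H] in
theorem map_zero : c 0 = 0 := by
  have := hE.2.2.2.1 0 ⟨le_rfl, hu⟩ 0 ⟨le_rfl, hu⟩ (by rwa [add_zero])
  rwa [add_zero, left_eq_add] at this

theorem add_mem_zero (hx : x ∈ E 0) (hy : y ∈ E 0) : x + y ∈ E 0 := by
  rcases hu.eq_or_lt with rfl | hu'
  · have hv : v = 0 := hE.2.2.2.2 ▸ hE.map_zero le_rfl
    have hx0 := hE.1.1.mem_Icc ⟨le_rfl, le_rfl⟩ hx
    rw [hv, Icc_self, mem_singleton_iff] at hx0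
    rwa [hx0, zero_add]
  · exact hE.1.add_mem_of_lt ⟨le_rfl, hu⟩ hu' hx hy

theorem exists_sub_of_mem_closure {a : K} (ha : a ∈ AddSubgroup.closure (E 0)) :
    ∃ p ∈ E 0, ∃ q ∈ E 0, a = p - q :=
  AddSubgroup.exists_sub_of_mem_closure (hE.map_zero hu ▸ hE.2.2.1 0 ⟨le_rfl, hu⟩)
    (fun _ hp _ hq => hE.add_mem_zero hu hp hq) ha

theorem mem_zero_of_mem_closure {a : K} (ha : a ∈ AddSubgroup.closure (E 0)) (h0a : 0 ≤ a) :
    a ∈ E 0 := by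
  obtain ⟨p, hp, q, hq, rfl⟩ := hE.exists_sub_of_mem_closure hu ha
  exact hE.1.1.sub_mem_zero ⟨le_rfl, hu⟩ hp hq (sub_nonneg.1 h0a)

theorem add_mem_iff (ht : t ∈ Icc 0 u) {a : K} (ha : a ∈ AddSubgroup.closure (E 0)) :
    c t + a ∈ E t ↔ (t = 0 → 0 ≤ a) ∧ (t = u → a ≤ 0) := by
  constructor
  · intro h
    have hmem := hE.1.1.mem_Icc ht h
    refine ⟨fun ht0 => ?_, fun htu => ?_⟩
    · simpa [ht0, hE.map_zero hu] using hmem.1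
    · simpa [htu, hE.2.2.2.2] using hmem.2
  rintro ⟨h0, hu'⟩
  rcases ht.1.eq_or_lt with rfl | h0t
  · rw [hE.map_zero hu, zero_add]
    exact hE.mem_zero_of_mem_closure hu ha (h0 rfl)
  rcases ht.2.eq_or_lt with rfl | htu
  · have := hE.1.1.sub_mem_sub ⟨le_rfl, hu⟩
      (hE.mem_zero_of_mem_closure hu (neg_mem ha) (neg_nonneg.2 (hu' rfl)))
    rwa [sub_zero, sub_neg_eq_add, ← hE.2.2.2.2] at this
  obtain ⟨p, hp, q, hq, rfl⟩ := hE.exists_sub_of_mem_closure hu ha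
  rw [← add_sub_assoc]
  exact hE.1.sub_mem_of_pos ht h0t (hE.1.add_mem_of_lt ht htu (hE.2.2.1 t ht) hp) hq

end IsStrongDecomp

end StrongDecomposition

universe w

instance ULift.isOrderedAddMonoid {A : Type*} [AddCommMonoid A] [PartialOrder A]
    [IsOrderedAddMonoid A] : IsOrderedAddMonoid (ULift.{w} A) where
  add_le_add_left _ _ h c := add_le_add_left (α := A) h c.down

section LexRepresentation

variable {K : Type*} [AddCommGroup K] [PartialOrder K] [IsOrderedAddMonoid K]
  {H : Type*} [AddCommGroup H] [PartialOrder H] [IsOrderedAddMonoid H]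
  {v : K} {u : H} {E : H → Set K} {c : H → K}

def lexSum (c : H → K) (S : AddSubgroup K) (p : H ×ₗ ULift.{w} S) : K :=
  c (ofLex p).1 + ((ofLex p).2.down : K)

namespace IsStrongDecomp

variable (hE : IsStrongDecomp v u E c) (hu : 0 ≤ u)
include hE hu

theorem lexSum_mem_iff {p : H ×ₗ ULift.{w} (AddSubgroup.closure (E 0))}
    (hp : (ofLex p).1 ∈ Icc 0 u) :
    lexSum c _ p ∈ E (ofLex p).1 ↔ p ∈ Icc 0 (toLex (u, 0)) := by
  rw [Prod.Lex.mem_Icc_zero_toLex_iff, and_iff_right hp]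
  exact hE.add_mem_iff hu hp (ofLex p).2.down.2

theorem lexSum_mem {p : H ×ₗ ULift.{w} (AddSubgroup.closure (E 0))}
    (hp : p ∈ Icc 0 (toLex (u, 0))) : lexSum c _ p ∈ E (ofLex p).1 :=
  (hE.lexSum_mem_iff hu (Prod.Lex.mem_Icc_zero_toLex_iff.1 hp).1).2 hp

omit [IsOrderedAddMonoid K] [IsOrderedAddMonoid H] hu in
theorem lexSum_add {p q : H ×ₗ ULift.{w} (AddSubgroup.closure (E 0))}
    (hp : (ofLex p).1 ∈ Icc 0 u) (hq : (ofLex q).1 ∈ Icc 0 u)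
    (hpq : (ofLex p).1 + (ofLex q).1 ≤ u) :
    lexSum c _ (p + q) = lexSum c _ p + lexSum c _ q := by
  simp only [lexSum, ofLex_add, Prod.fst_add, Prod.snd_add, ULift.add_down,
    AddSubgroup.coe_add, hE.2.2.2.1 _ hp _ hq hpq]
  abel

theorem isEffectHom_lexSum :
    IsEffectHom (toLex (u, (0 : ULift.{w} (AddSubgroup.closure (E 0))))) v (lexSum c _) := by
  refine .of_map_add (fun p hp => hE.1.1.mem_Icc ?_ (hE.lexSum_mem hu hp))
    (by simp [lexSum, hE.2.2.2.2]) fun p hp q hq hpq => ?_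
  · exact (Prod.Lex.mem_Icc_zero_toLex_iff.1 hp).1
  · exact hE.lexSum_add (Prod.Lex.mem_Icc_zero_toLex_iff.1 hp).1
      (Prod.Lex.mem_Icc_zero_toLex_iff.1 hq).1
      (Prod.Lex.mem_Icc_zero_toLex_iff.1 ⟨add_nonneg hp.1 hq.1, hpq⟩).1.2

theorem bijOn_lexSum :
    BijOn (lexSum c _) (Icc 0 (toLex (u, (0 : ULift.{w} (AddSubgroup.closure (E 0))))))
      (Icc 0 v) := by
  refine ⟨fun p hp => (hE.isEffectHom_lexSum hu).1 p hp, fun p hp q hq hpq => ?_,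
    fun x hx => ?_⟩
  · have hfst : (ofLex p).1 = (ofLex q).1 :=
      hE.1.1.eq_of_mem (Prod.Lex.mem_Icc_zero_toLex_iff.1 hp).1
        (Prod.Lex.mem_Icc_zero_toLex_iff.1 hq).1 (hE.lexSum_mem hu hp)
        (by rw [hpq]; exact hE.lexSum_mem hu hq)
    have hsnd : ((ofLex p).2.down : K) = (ofLex q).2.down := by
      simpa [lexSum, hfst] using hpq
    exact ofLex.injective (Prod.ext hfst (ULift.ext _ _ (Subtype.ext hsnd)))
  · obtain ⟨t, ht, hxt⟩ := hE.1.1.exists_mem hx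
    let p : H ×ₗ ULift.{w} (AddSubgroup.closure (E 0)) :=
      toLex (t, ULift.up ⟨x - c t, hE.sub_mem_closure ht hxt⟩)
    have hpx : lexSum c _ p = x := add_sub_cancel _ _
    exact ⟨p, (hE.lexSum_mem_iff hu (p := p) ht).1 (hpx ▸ hxt), hpx⟩

theorem add_le_of_lexSum_add_le {p q : H ×ₗ ULift.{w} (AddSubgroup.closure (E 0))}
    (hp : p ∈ Icc 0 (toLex (u, 0))) (hq : q ∈ Icc 0 (toLex (u, 0)))
    (hpq : lexSum c _ p + lexSum c _ q ≤ v) : p + q ≤ toLex (u, 0) := by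
  have hp1 := (Prod.Lex.mem_Icc_zero_toLex_iff.1 hp).1
  have hq1 := (Prod.Lex.mem_Icc_zero_toLex_iff.1 hq).1
  obtain ⟨hpq1, hmem⟩ :=
    hE.1.1.add_mem hp1 hq1 (hE.lexSum_mem hu hp) (hE.lexSum_mem hu hq) hpq
  rw [← hE.lexSum_add hp1 hq1 hpq1.2] at hmem
  exact ((hE.lexSum_mem_iff hu (p := p + q) hpq1).1 hmem).2

theorem isEffectIso_lex :
    IsEffectIso v (toLex (u, (0 : ULift.{w} (AddSubgroup.closure (E 0)))))
      (Function.invFunOn (lexSum c _) (Icc 0 (toLex (u, 0)))) :=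
  (hE.isEffectHom_lexSum hu).isEffectIso_invFunOn
    (Prod.Lex.mem_Icc_zero_toLex_iff.2 ⟨⟨hu, le_rfl⟩, fun _ => le_rfl, fun _ => le_rfl⟩).1
    (hE.bijOn_lexSum hu) fun _ hp _ hq => hE.add_le_of_lexSum_add_le hu hp hq

end IsStrongDecomp

end LexRepresentation

section Transfer

variable {K : Type*} [AddCommGroup K] [PartialOrder K] [IsOrderedAddMonoid K]
  {L : Type*} [AddCommGroup L] [PartialOrder L] [IsOrderedAddMonoid L]
  {H : Type*} [AddCommGroup H] [PartialOrder H] [IsOrderedAddMonoid H]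
  {v : K} {w : L} {u : H} {f : K → L} {g : L → K} {E : H → Set L}

omit [IsOrderedAddMonoid L] in
theorem IsDecomp.preimage (hE : IsDecomp w u E) (hf : IsEffectHom v w f)
    (hg : IsEffectHom w v g) (hfg : ∀ y ∈ Icc (0 : L) w, f (g y) = y) :
    IsDecomp v u fun t => {x | x ∈ Icc 0 v ∧ f x ∈ E t} := by
  refine ⟨fun t ht => ?_, fun s hs t ht hst => eq_empty_of_forall_notMem fun x hx => ?_, ?_,
    fun t ht => ?_, fun s hs t ht x hx y hy hxy => ?_⟩
  · obtain ⟨z, hz⟩ := hE.1 t ht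
    exact ⟨g z, hg.1 z (hE.mem_Icc ht hz), by rwa [hfg z (hE.mem_Icc ht hz)]⟩
  · exact (hE.2.1 s hs t ht hst).subset ⟨hx.1.2, hx.2.2⟩
  · ext x
    refine ⟨fun hx => ?_, fun hx => ?_⟩
    · obtain ⟨t, -, hxt⟩ := mem_iUnion₂.1 hx
      exact hxt.1
    · obtain ⟨t, ht, hfx⟩ := hE.exists_mem (hf.1 x hx)
      exact mem_biUnion ht ⟨hx, hfx⟩
  · ext x
    refine ⟨?_, fun ⟨hx, hfx⟩ =>
      ⟨v - x, ⟨sub_mem_Icc_zero_iff_right.2 hx, ?_⟩, sub_sub_cancel v x⟩⟩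
    · rintro ⟨y, hy, rfl⟩
      exact ⟨sub_mem_Icc_zero_iff_right.2 hy.1, hf.map_sub hy.1 ▸ hE.sub_mem_sub ht hy.2⟩
    · rw [hf.map_sub hx]
      simpa using hE.sub_mem_sub (sub_mem_Icc_zero_iff_right.2 ht) hfx
  · obtain ⟨hfxy, hfadd⟩ := hf.2.2 x hx.1 y hy.1 hxy
    obtain ⟨hst, hmem⟩ := hE.add_mem hs ht hx.2 hy.2 hfxy
    exact ⟨hst.2, ⟨add_nonneg hx.1.1 hy.1.1, hxy⟩, hfadd ▸ hmem⟩

theorem IsStrongPerfect.of_isEffectIso (hf : IsEffectIso v w f) (h : IsStrongPerfect w u) :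
    IsStrongPerfect v u := by
  obtain ⟨hf, g, hg, hgf, hfg⟩ := hf
  obtain ⟨E, c, hE⟩ := h
  have hD := hE.1.1
  have hgE : ∀ {t z}, t ∈ Icc 0 u → z ∈ E t → g z ∈ {x | x ∈ Icc 0 v ∧ f x ∈ E t} :=
    fun ht hz => ⟨hg.1 _ (hD.mem_Icc ht hz), by rwa [hfg _ (hD.mem_Icc ht hz)]⟩
  refine ⟨_, g ∘ c, (hD.preimage hf hg hfg).isStrongDecomp ?_ ?_
    (fun t ht => hgE ht (hE.2.2.1 t ht)) ?_ (by simp [hE.2.2.2.2, hg.2.1])⟩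
  · intro s hs t ht hst x hx y hy
    have hlt := hE.1.2 s hs t ht hst _ hx.2 _ hy.2
    refine lt_of_le_of_ne ?_ fun hxy => hlt.ne (congrArg f hxy)
    rw [← hgf x hx.1, ← hgf y hy.1]
    exact hg.monotoneOn (hf.1 x hx.1) (hf.1 y hy.1) hlt.le
  · intro t ht x hx y hy
    obtain ⟨z, hz, hxz, hyz⟩ := (hE.2.1.2 t ht).1 _ hx.2 _ hy.2
    refine ⟨g z, hgE ht hz, ?_, ?_⟩
    · rw [← hgf x hx.1]
      exact hg.monotoneOn (hf.1 x hx.1) (hD.mem_Icc ht hz) hxz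
    · rw [← hgf y hy.1]
      exact hg.monotoneOn (hf.1 y hy.1) (hD.mem_Icc ht hz) hyz
  · intro s hs t ht hst
    have hst' : s + t ∈ Icc 0 u := ⟨add_nonneg hs.1 ht.1, hst⟩
    have hle := (hD.mem_Icc hst' (hE.2.2.1 _ hst')).2
    simp only [Function.comp_apply, hE.2.2.2.1 s hs t ht hst] at hle ⊢
    exact (hg.2.2 _ (hD.mem_Icc hs (hE.2.2.1 s hs)) _ (hD.mem_Icc ht (hE.2.2.1 t ht)) hle).2

end Transfer

theorem isStrongPerfect_lex {H G : Type*} [AddCommGroup H] [PartialOrder H]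
    [IsOrderedAddMonoid H] [AddCommGroup G] [PartialOrder G] [IsOrderedAddMonoid G]
    (hG : IsDirectedGroup G) (u : H) : IsStrongPerfect (toLex (u, (0 : G))) u := by
  set w := toLex (u, (0 : G))
  let E : H → Set (H ×ₗ G) := fun t => {p | p ∈ Icc 0 w ∧ (ofLex p).1 = t}
  have hc : ∀ t ∈ Icc 0 u, toLex (t, (0 : G)) ∈ E t := fun t ht =>
    ⟨Prod.Lex.mem_Icc_zero_toLex_iff.2 ⟨ht, fun _ => le_rfl, fun _ => le_rfl⟩, rfl⟩
  have hE : IsDecomp w u E := by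
    refine ⟨fun t ht => ⟨_, hc t ht⟩, fun s _ t _ hst => ?_, ?_, fun t _ => ?_,
      fun s _ t _ p hp q hq hpq => ?_⟩
    · exact eq_empty_of_forall_notMem fun p hp => hst (hp.1.2.symm.trans hp.2.2)
    · ext p
      refine ⟨fun hp => ?_,
        fun hp => mem_biUnion (Prod.Lex.mem_Icc_zero_toLex_iff.1 hp).1 ⟨hp, rfl⟩⟩
      obtain ⟨t, -, hpt⟩ := mem_iUnion₂.1 hp
      exact hpt.1
    · ext q
      refine ⟨?_, fun ⟨hq, hqt⟩ =>
        ⟨w - q, ⟨sub_mem_Icc_zero_iff_right.2 hq, ?_⟩, sub_sub_cancel w q⟩⟩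
      · rintro ⟨p, ⟨hp, rfl⟩, rfl⟩
        exact ⟨sub_mem_Icc_zero_iff_right.2 hp, rfl⟩
      · simp [w, hqt]
    · have hmem : p + q ∈ Icc 0 w := ⟨add_nonneg hp.1.1 hq.1.1, hpq⟩
      have hfst : (ofLex (p + q)).1 = s + t := by simp [hp.2, hq.2]
      exact ⟨hfst ▸ (Prod.Lex.mem_Icc_zero_toLex_iff.1 hmem).1.2, hmem, hfst⟩
  refine ⟨E, fun t => toLex (t, 0), hE.isStrongDecomp ?_ ?_ hc ?_ rfl⟩
  · intro s _ t _ hst p hp q hq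
    exact Prod.Lex.lt_iff.2 (Or.inl (by rwa [hp.2, hq.2]))
  · intro t ht p hp q hq
    rcases ht.2.eq_or_lt with rfl | htu
    · exact ⟨w, ⟨⟨hp.1.1.trans hp.1.2, le_rfl⟩, rfl⟩, hp.1.2, hq.1.2⟩
    obtain ⟨d, hpd, hqd⟩ := hG (ofLex p).2 (ofLex q).2
    have hpz : p ≤ toLex (t, d) := Prod.Lex.le_iff.2 (Or.inr ⟨hp.2, hpd⟩)
    exact ⟨toLex (t, d), ⟨⟨hp.1.1.trans hpz, Prod.Lex.toLex_le_toLex.2 (Or.inl htu)⟩, rfl⟩,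
      hpz, Prod.Lex.le_iff.2 (Or.inr ⟨hq.2, hqd⟩)⟩
  · intro s _ t _ _
    rw [← toLex_add, Prod.mk_add_mk, add_zero]

theorem RDP.of_convex_embedding {K G : Type*} [AddCommGroup K] [PartialOrder K]
    [IsOrderedAddMonoid K] [AddCommGroup G] [PartialOrder G] [IsOrderedAddMonoid G]
    (hK : RDP K) (i : G →+ K) (hi : ∀ a b, i a ≤ i b ↔ a ≤ b)
    (hconvex : ∀ k b, 0 ≤ k → k ≤ i b → ∃ a, i a = k) : RDP G := by
  intro a₁ a₂ b₁ b₂ h₁ h₂ h₃ h₄ h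
  have hpos : ∀ {a}, 0 ≤ a → 0 ≤ i a := fun ha => by simpa using (hi 0 _).2 ha
  obtain ⟨c₁₁, c₁₂, c₂₁, c₂₂, d₁₁, d₁₂, d₂₁, d₂₂, e₁, e₂, e₃, e₄⟩ :=
    hK _ _ _ _ (hpos h₁) (hpos h₂) (hpos h₃) (hpos h₄) (by rw [← map_add, ← map_add, h])
  have hlift : ∀ {k k' a}, 0 ≤ k → 0 ≤ k' → i a = k + k' → ∃ g, i g = k :=
    fun hk hk' ha => hconvex _ _ hk (ha ▸ le_add_of_nonneg_right hk')
  obtain ⟨g₁₁, rfl⟩ := hlift d₁₁ d₁₂ e₁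
  obtain ⟨g₁₂, rfl⟩ := hlift d₁₂ d₁₁ (e₁.trans (add_comm _ _))
  obtain ⟨g₂₁, rfl⟩ := hlift d₂₁ d₂₂ e₂
  obtain ⟨g₂₂, rfl⟩ := hlift d₂₂ d₂₁ (e₂.trans (add_comm _ _))
  have hnonneg : ∀ {g}, 0 ≤ i g → 0 ≤ g := fun hg => (hi 0 _).1 (by simpa using hg)
  have hinj : Function.Injective i := fun a b hab =>
    le_antisymm ((hi a b).1 hab.le) ((hi b a).1 hab.ge)
  exact ⟨g₁₁, g₁₂, g₂₁, g₂₂, hnonneg d₁₁, hnonneg d₁₂, hnonneg d₂₁, hnonneg d₂₂,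
    hinj (by rw [map_add, e₁]), hinj (by rw [map_add, e₂]), hinj (by rw [map_add, e₃]),
    hinj (by rw [map_add, e₄])⟩

theorem IsStrongPerfect.exists_lex_representation {K : Type x} {H : Type y} [AddCommGroup K]
    [PartialOrder K] [IsOrderedAddMonoid K] [AddCommGroup H] [PartialOrder H]
    [IsOrderedAddMonoid H] {v : K} {u : H} (hu : 0 ≤ u) (hK : RDP K) (h : IsStrongPerfect v u) :
    ∃ (G : Type (max x y)) (_ : AddCommGroup G) (_ : PartialOrder G) (_ : IsOrderedAddMonoid G),
      IsDirectedGroup G ∧ RDP G ∧ ∃ f : K → H ×ₗ G, IsEffectIso v (toLex (u, (0 : G))) f := by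
  obtain ⟨E, c, hE⟩ := h
  have hE0 : ∀ {p}, p ∈ E 0 → 0 ≤ p := fun hp => (hE.1.1.mem_Icc ⟨le_rfl, hu⟩ hp).1
  have hbound : ∀ a : ULift.{y} (AddSubgroup.closure (E 0)), ∃ p ∈ E 0, (a.down : K) ≤ p := by
    intro a
    obtain ⟨p, hp, q, hq, ha⟩ := hE.exists_sub_of_mem_closure hu a.down.2
    exact ⟨p, hp, ha ▸ sub_le_self p (hE0 hq)⟩
  refine ⟨ULift.{y} (AddSubgroup.closure (E 0)), inferInstance, inferInstance, inferInstance,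
    fun a b => ?_, ?_, _, hE.isEffectIso_lex hu⟩
  · obtain ⟨p, hp, hap⟩ := hbound a
    obtain ⟨q, hq, hbq⟩ := hbound b
    exact ⟨⟨⟨p + q, AddSubgroup.subset_closure (hE.add_mem_zero hu hp hq)⟩⟩,
      hap.trans (le_add_of_nonneg_right (hE0 hq)), hbq.trans (le_add_of_nonneg_left (hE0 hp))⟩
  · refine RDP.of_convex_embedding hK
      ((AddSubgroup.closure (E 0)).subtype.comp AddEquiv.ulift.toAddMonoidHom)
      (fun _ _ => Iff.rfl) fun k b hk hkb => ?_
    have hb := hE.mem_zero_of_mem_closure hu b.down.2 (hk.trans hkb)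
    exact ⟨⟨⟨k, AddSubgroup.subset_closure (hE.1.1.mem_zero_of_le hu hk hkb hb)⟩⟩, rfl⟩

theorem strongPerfect_iff_lex_representation_general {K : Type x} {H : Type y}
    [AddCommGroup K] [PartialOrder K] [IsOrderedAddMonoid K] [AddCommGroup H] [PartialOrder H] [IsOrderedAddMonoid H]
    (v : K) (u : H) (hK : RDP K)
    (hu : IsStrongUnit u) :
    (IsStrongPerfect v u ↔
      ∃ (G : Type (max x y)) (_ : AddCommGroup G) (_ : PartialOrder G) (_ : IsOrderedAddMonoid G), IsDirectedGroup G ∧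
        ∃ f : K → H ×ₗ G, IsEffectIso v (toLex (u, (0 : G))) f) ∧
    (IsStrongPerfect v u →
      ∃ (G : Type (max x y)) (_ : AddCommGroup G) (_ : PartialOrder G) (_ : IsOrderedAddMonoid G), IsDirectedGroup G ∧ RDP G ∧
        ∃ f : K → H ×ₗ G, IsEffectIso v (toLex (u, (0 : G))) f) := by
  refine ⟨⟨fun h => ?_, fun ⟨G, _, _, _, hG, f, hf⟩ =>
    .of_isEffectIso hf (isStrongPerfect_lex hG u)⟩, fun h => h.exists_lex_representation hu.1 hK⟩
  obtain ⟨G, _, _, _, hG, -, f, hf⟩ := h.exists_lex_representation hu.1 hK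
  exact ⟨G, _, _, _, hG, f, hf⟩

/-- `E = Γ(K, v)` (with RDP) is strong `(H, u)`-perfect iff there is a
directed Abelian po-group `G` with `E ≅ Γ(H ×ₗ G, (u, 0))`; moreover `G` can be chosen
to satisfy RDP. -/
theorem strongPerfect_iff_lex_representation {K : Type x} {H : Type y}
    [AddCommGroup K] [PartialOrder K] [IsOrderedAddMonoid K] [AddCommGroup H] [PartialOrder H] [IsOrderedAddMonoid H]
    (v : K) (u : H) (hv : IsStrongUnit v) (hK : RDP K)
    (hu : IsStrongUnit u) (hH : RDP H) :
    (IsStrongPerfect v u ↔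
      ∃ (G : Type (max x y)) (_ : AddCommGroup G) (_ : PartialOrder G) (_ : IsOrderedAddMonoid G), IsDirectedGroup G ∧
        ∃ f : K → H ×ₗ G, IsEffectIso v (toLex (u, (0 : G))) f) ∧
    (IsStrongPerfect v u →
      ∃ (G : Type (max x y)) (_ : AddCommGroup G) (_ : PartialOrder G) (_ : IsOrderedAddMonoid G), IsDirectedGroup G ∧ RDP G ∧
        ∃ f : K → H ×ₗ G, IsEffectIso v (toLex (u, (0 : G))) f) :=
  strongPerfect_iff_lex_representation_general v u hK hu
end

section
/- Let E = Γ(H ×ₗ G, (u, 0)), where (H, u) is an Abelian unital po-group with RDP and G is a directed Abelian po-group with RDP. Then E is a subdirect product of a family of antilattice interval effect algebras of the form Γ(H_i ×ₗ G_i, (u_i, 0)): there exist an index set ι, for each i ∈ ι an Abelian unital po-group (H_i, u_i) with RDP and a directed Abelian po-group G_i with RDP such that Γ(H_i ×ₗ G_i, (u_i, 0)) is an antilattice, and a map Φ from E into the product ∏_{i∈ι} Γ(H_i ×ₗ G_i, (u_i, 0)) such that Φ is injective, Φ(a) ≤ Φ(b) (componentwise) if and only if a ≤ b, Φ((u,0))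 has all components equal to the respective units (u_i, 0), Φ(x + y) = Φ(x) + Φ(y) componentwise whenever x + y ≤ (u, 0), and for each i ∈ ι the i-th coordinate map of Φ is surjective onto Γ(H_i ×ₗ G_i, (u_i, 0)). -/
open Set

/-!
Write `K = H ×ₗ G` and `v = (u, 0)`; `K` inherits Riesz interpolation from `H` and `G`, and
interpolation passes to quotients of `K` by o-ideals. For every `w ≰ 0`, Zorn's lemma gives an
o-ideal `S_w` maximal among those containing no element above `w`. By maximality every nonzero
positive element of `K/S_w` has a multiple above `w/S_w`, while `w/S_w ≰ 0`; so two positive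
elements of `K/S_w` with infimum `0` cannot both be nonzero, which together with interpolation
makes every interval of `K/S_w` an antilattice. The map `a ↦ (a/S_w)_w` embeds `Γ(K, v)` into
the product of the `Γ(K/S_w ×ₗ 1, (v/S_w, 0))`: it reflects the order because `a ≰ b` is seen
modulo `S_{a-b}`, and interpolation lifts every element of `[0, v/S_w]` to `[0, v]`.
-/

def RieszInterpolation (α : Type*) [Preorder α] : Prop :=
  ∀ a₁ a₂ b₁ b₂ : α, a₁ ≤ b₁ → a₁ ≤ b₂ → a₂ ≤ b₁ → a₂ ≤ b₂ →
    ∃ c, a₁ ≤ c ∧ a₂ ≤ c ∧ c ≤ b₁ ∧ c ≤ b₂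

theorem isGLB_pair_iff {α : Type*} [Preorder α] {a b c : α} :
    IsGLB {a, b} c ↔ c ≤ a ∧ c ≤ b ∧ ∀ z, z ≤ a → z ≤ b → z ≤ c := by
  simp [IsGLB, IsGreatest, upperBounds, lowerBounds, and_assoc]

theorem isLUB_pair_iff {α : Type*} [Preorder α] {a b c : α} :
    IsLUB {a, b} c ↔ a ≤ c ∧ b ≤ c ∧ ∀ z, a ≤ z → b ≤ z → c ≤ z := by
  simp [IsLUB, IsLeast, upperBounds, lowerBounds, and_assoc]

def OrderIso.restrictIcc {α β : Type*} [Preorder α] [Preorder β] (e : α ≃o β) (a b : α) :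
    Icc a b ≃o Icc (e a) (e b) where
  toEquiv := e.toEquiv.subtypeEquiv fun x => by simp
  map_rel_iff' := e.le_iff_le

theorem IsAntilattice.of_orderIso {α β : Type*} [PartialOrder α] [PartialOrder β] (e : α ≃o β)
    (h : IsAntilattice β) : IsAntilattice α := by
  intro a b hab
  have : (∃ c, IsLUB {e a, e b} c) ∨ ∃ c, IsGLB {e a, e b} c := by
    rcases hab with ⟨c, hc⟩ | ⟨c, hc⟩
    · exact .inl ⟨e c, by rwa [← image_pair, e.isLUB_image']⟩
    · exact .inr ⟨e c, by rwa [← image_pair, e.isGLB_image']⟩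
  simpa only [e.le_iff_le] using h _ _ this

theorem RieszInterpolation.lex {α β : Type*} [PartialOrder α] [PartialOrder β]
    [IsDirectedOrder β] [IsCodirectedOrder β] (hα : RieszInterpolation α)
    (hβ : RieszInterpolation β) : RieszInterpolation (α ×ₗ β) := by
  classical
  intro x₁ x₂ y₁ y₂ h₁₁ h₁₂ h₂₁ h₂₂
  obtain ⟨⟨a₁, g₁⟩, rfl⟩ := toLex.surjective x₁
  obtain ⟨⟨a₂, g₂⟩, rfl⟩ := toLex.surjective x₂
  obtain ⟨⟨b₁, k₁⟩, rfl⟩ := toLex.surjective y₁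
  obtain ⟨⟨b₂, k₂⟩, rfl⟩ := toLex.surjective y₂
  rw [Prod.Lex.toLex_le_toLex'] at h₁₁ h₁₂ h₂₁ h₂₂
  obtain ⟨a, ha₁, ha₂, hab₁, hab₂⟩ := hα a₁ a₂ b₁ b₂ h₁₁.1 h₁₂.1 h₂₁.1 h₂₂.1
  -- only the pairs whose first coordinate equals `a` constrain the second coordinate
  obtain ⟨d, hd₁, hd₂⟩ := exists_le_le k₁ k₂
  obtain ⟨e, he₁, he₂, hde⟩ := directed_of₃ (· ≤ ·) g₁ g₂ d
  let lo : α × β → β := fun x => if x.1 = a then x.2 else d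
  let hi : α × β → β := fun y => if y.1 = a then y.2 else e
  have lo_le_hi : ∀ x y : α × β, x.1 ≤ y.1 ∧ (x.1 = y.1 → x.2 ≤ y.2) → x.2 ≤ e → d ≤ y.2 →
      lo x ≤ hi y := by
    intro x y hxy hxe hdy
    simp only [lo, hi]
    split_ifs with hx hy hy
    exacts [hxy.2 (hx.trans hy.symm), hxe, hdy, hde]
  obtain ⟨g, hg₁, hg₂, hg₁', hg₂'⟩ := hβ _ _ _ _ (lo_le_hi _ _ h₁₁ he₁ hd₁)
    (lo_le_hi _ _ h₁₂ he₁ hd₂) (lo_le_hi _ _ h₂₁ he₂ hd₁) (lo_le_hi _ _ h₂₂ he₂ hd₂)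
  have le_mid : ∀ x : α × β, x.1 ≤ a → lo x ≤ g → toLex x ≤ toLex (a, g) := by
    intro x hxa hxg
    refine Prod.Lex.toLex_le_toLex'.2 ⟨hxa, fun hx => ?_⟩
    simpa [lo, hx] using hxg
  have mid_le : ∀ y : α × β, a ≤ y.1 → g ≤ hi y → toLex (a, g) ≤ toLex y := by
    intro y hay hgy
    refine Prod.Lex.toLex_le_toLex'.2 ⟨hay, fun hy => ?_⟩
    simpa [hi, hy.symm] using hgy
  exact ⟨toLex (a, g), le_mid _ ha₁ hg₁, le_mid _ ha₂ hg₂, mid_le _ hab₁ hg₁', mid_le _ hab₂ hg₂'⟩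

section PoGroup

variable {K : Type*} [AddCommGroup K] [PartialOrder K] [IsOrderedAddMonoid K]

theorem RDP.rieszInterpolation (hK : RDP K) : RieszInterpolation K := by
  intro a₁ a₂ b₁ b₂ h₁₁ h₁₂ h₂₁ h₂₂
  obtain ⟨c₁₁, c₁₂, c₂₁, c₂₂, p₁₁, p₁₂, p₂₁, p₂₂, e₁, -, e₃, e₄⟩ :=
    hK (b₁ - a₁) (b₂ - a₂) (b₁ - a₂) (b₂ - a₁) (sub_nonneg.2 h₁₁) (sub_nonneg.2 h₂₂)
      (sub_nonneg.2 h₂₁) (sub_nonneg.2 h₁₂) (by abel)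
  have hc₂ : a₁ + c₁₂ = a₂ + c₂₁ := by linear_combination (norm := abel_nf) e₃ - e₁
  have hb₁ : b₁ = a₁ + c₁₂ + c₁₁ := by linear_combination (norm := abel_nf) e₁
  have hb₂ : b₂ = a₁ + c₁₂ + c₂₂ := by linear_combination (norm := abel_nf) e₄
  exact ⟨a₁ + c₁₂, le_add_of_nonneg_right p₁₂, hc₂ ▸ le_add_of_nonneg_right p₂₁,
    hb₁ ▸ le_add_of_nonneg_right p₁₁, hb₂ ▸ le_add_of_nonneg_right p₂₂⟩

theorem RieszInterpolation.rdp (hK : RieszInterpolation K) : RDP K := by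
  intro a₁ a₂ b₁ b₂ ha₁ ha₂ hb₁ hb₂ hab
  have h₁ : a₁ - b₂ ≤ b₁ := sub_le_iff_le_add.2 (hab ▸ le_add_of_nonneg_right ha₂)
  obtain ⟨c, hc₀, hc, hca, hcb⟩ := hK 0 (a₁ - b₂) a₁ b₁ ha₁ hb₁ (sub_le_self _ hb₂) h₁
  refine ⟨c, a₁ - c, b₁ - c, b₂ - a₁ + c, hc₀, sub_nonneg.2 hca, sub_nonneg.2 hcb, ?_,
    by abel, by linear_combination (norm := abel_nf) hab, by abel, by abel⟩
  rw [sub_add_eq_add_sub, sub_nonneg]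
  exact sub_le_iff_le_add'.1 hc

theorem IsDirectedGroup.isDirectedOrder (hK : IsDirectedGroup K) : IsDirectedOrder K := ⟨hK⟩

theorem IsDirectedGroup.isCodirectedOrder (hK : IsDirectedGroup K) : IsCodirectedOrder K :=
  ⟨fun a b => let ⟨c, ha, hb⟩ := hK (-a) (-b); ⟨-c, neg_le.1 ha, neg_le.1 hb⟩⟩

theorem IsGLB.nsmul_right {p q : K} (h : IsGLB {p, q} 0) (n : ℕ) : IsGLB {p, n • q} 0 := by
  obtain ⟨hp, hq, hglb⟩ := isGLB_pair_iff.1 h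
  induction n with
  | zero => simpa using isGLB_pair_iff.2 ⟨hp, le_rfl, fun z _ hz => hz⟩
  | succ n ih =>
    obtain ⟨-, -, hglb'⟩ := isGLB_pair_iff.1 ih
    refine isGLB_pair_iff.2 ⟨hp, nsmul_nonneg hq _, fun z hzp hzq => hglb z hzp ?_⟩
    have := hglb' (z - q) ((sub_le_self z hq).trans hzp)
      (sub_le_iff_le_add.2 (hzq.trans_eq (succ_nsmul q n)))
    exact sub_nonpos.1 this

theorem IsGLB.nsmul {p q : K} (h : IsGLB {p, q} 0) (n : ℕ) : IsGLB {n • p, n • q} 0 := by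
  have h' : IsGLB {n • q, p} 0 := Set.pair_comm p (n • q) ▸ h.nsmul_right n
  exact Set.pair_comm (n • q) (n • p) ▸ h'.nsmul_right n

theorem isAntilattice_Icc (hK : RieszInterpolation K)
    (hdisj : ∀ p q : K, IsGLB {p, q} 0 → p = 0 ∨ q = 0) (v : K) :
    IsAntilattice (Icc 0 v) := by
  rintro ⟨a, ha₀, hav⟩ ⟨b, hb₀, hbv⟩ (⟨⟨c, _⟩, hc⟩ | ⟨⟨c, _⟩, hc⟩)
  · obtain ⟨hac, hbc, hleast⟩ := isLUB_pair_iff.1 hc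
    have : IsGLB {c - a, c - b} 0 := by
      refine isGLB_pair_iff.2 ⟨sub_nonneg.2 hac, sub_nonneg.2 hbc, fun z hza hzb => ?_⟩
      obtain ⟨t, hat, hbt, htc, htv⟩ :=
        hK a b (c - z) v (le_sub_comm.1 hza) hav (le_sub_comm.1 hzb) hbv
      have hct : c ≤ t := hleast ⟨t, ha₀.trans hat, htv⟩ hat hbt
      simpa using hct.trans htc
    rcases hdisj _ _ this with h | h
    · exact Or.inr (by simpa [sub_eq_zero.1 h] using hbc)
    · exact Or.inl (by simpa [sub_eq_zero.1 h] using hac)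
  · obtain ⟨hca, hcb, hgreatest⟩ := isGLB_pair_iff.1 hc
    have : IsGLB {a - c, b - c} 0 := by
      refine isGLB_pair_iff.2 ⟨sub_nonneg.2 hca, sub_nonneg.2 hcb, fun z hza hzb => ?_⟩
      obtain ⟨t, hzt, h0t, hta, htb⟩ :=
        hK (z + c) 0 a b (le_sub_iff_add_le.1 hza) (le_sub_iff_add_le.1 hzb) ha₀ hb₀
      have htc : t ≤ c := hgreatest ⟨t, h0t, hta.trans hav⟩ hta htb
      simpa using hzt.trans htc
    rcases hdisj _ _ this with h | h
    · exact Or.inl (by simpa [sub_eq_zero.1 h] using hcb)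
    · exact Or.inr (by simpa [sub_eq_zero.1 h] using hca)

end PoGroup

theorem IsStrongUnit.toLex {H G : Type*} [AddCommGroup H] [PartialOrder H] [IsOrderedAddMonoid H]
    [AddCommGroup G] [PartialOrder G] [IsOrderedAddMonoid G] {u : H} (hu : IsStrongUnit u)
    (hu₀ : u ≠ 0) : IsStrongUnit (toLex (u, (0 : G))) := by
  have hpos : 0 < u := hu.1.lt_of_ne' hu₀
  refine ⟨Prod.Lex.toLex_le_toLex'.2 ⟨hu.1, fun _ => le_rfl⟩, fun x => ?_⟩
  obtain ⟨n, hn⟩ := hu.2 (ofLex x).1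
  refine ⟨n + 1, Prod.Lex.le_iff.2 (.inl ?_)⟩
  calc (ofLex x).1 ≤ n • u := hn
    _ < (n + 1) • u := by rw [succ_nsmul]; exact lt_add_of_pos_right _ hpos

theorem IsChain.exists_mem_mem_of_mem_sSup {G : Type*} [AddGroup G] {c : Set (AddSubgroup G)}
    (hchain : IsChain (· ≤ ·) c) (hne : c.Nonempty) {x y : G} (hx : x ∈ sSup c)
    (hy : y ∈ sSup c) : ∃ S ∈ c, x ∈ S ∧ y ∈ S := by
  rw [AddSubgroup.mem_sSup_of_directedOn hne hchain.directedOn] at hx hy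
  obtain ⟨S, hS, hxS⟩ := hx
  obtain ⟨T, hT, hyT⟩ := hy
  rcases hchain.total hS hT with hST | hTS
  exacts [⟨T, hT, hST hxS, hyT⟩, ⟨S, hS, hxS, hTS hyT⟩]

section OIdeal

variable {K : Type*} [AddCommGroup K] [PartialOrder K] [IsOrderedAddMonoid K]

theorem IsOIdeal.exists_upperBound {S : AddSubgroup K} (hS : IsOIdeal K S) {t : Set K}
    (ht : t.Finite) (htS : t ⊆ S) : ∃ c ∈ S, c ∈ upperBounds t := by
  induction t, ht using Set.Finite.induction_on with
  | empty => exact ⟨0, S.zero_mem, by simp⟩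
  | @insert a t _ _ ih =>
    obtain ⟨c, hcS, hc⟩ := ih ((subset_insert a t).trans htS)
    obtain ⟨d, hdS, had, hcd⟩ := hS.1 a (htS (mem_insert a t)) c hcS
    exact ⟨d, hdS, upperBounds_insert a t ▸ ⟨had, fun x hx => (hc hx).trans hcd⟩⟩

theorem isOIdeal_bot : IsOIdeal K ⊥ := by
  refine ⟨fun x hx y hy => ⟨0, zero_mem _, ?_⟩, fun x hx y hy z hxz hzy => ?_⟩
  · simp_all [AddSubgroup.mem_bot]
  · simp only [AddSubgroup.mem_bot] at *
    subst hx hy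
    exact le_antisymm hzy hxz

theorem isOIdeal_sSup_of_isChain {c : Set (AddSubgroup K)} (hc : ∀ S ∈ c, IsOIdeal K S)
    (hchain : IsChain (· ≤ ·) c) (hne : c.Nonempty) : IsOIdeal K (sSup c) := by
  refine ⟨fun x hx y hy => ?_, fun x hx y hy z hxz hzy => ?_⟩
  · obtain ⟨S, hS, hxS, hyS⟩ := hchain.exists_mem_mem_of_mem_sSup hne hx hy
    obtain ⟨z, hzS, hz⟩ := (hc S hS).1 x hxS y hyS
    exact ⟨z, AddSubgroup.mem_sSup_of_mem hS hzS, hz⟩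
  · obtain ⟨S, hS, hxS, hyS⟩ := hchain.exists_mem_mem_of_mem_sSup hne hx hy
    exact AddSubgroup.mem_sSup_of_mem hS ((hc S hS).2 x hxS y hyS z hxz hzy)

def oIdealAdjoin (S : AddSubgroup K) (c : K) : AddSubgroup K where
  carrier := {x | ∃ s ∈ S, ∃ n : ℕ, x ≤ s + n • c ∧ -x ≤ s + n • c}
  zero_mem' := ⟨0, S.zero_mem, 0, by simp⟩
  add_mem' := by
    rintro x y ⟨s, hs, m, hx, hx'⟩ ⟨t, ht, n, hy, hy'⟩
    refine ⟨s + t, S.add_mem hs ht, m + n, ?_, ?_⟩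
    · rw [add_nsmul, add_add_add_comm]; exact add_le_add hx hy
    · rw [add_nsmul, add_add_add_comm, neg_add]; exact add_le_add hx' hy'
  neg_mem' := by
    rintro x ⟨s, hs, n, hx, hx'⟩
    exact ⟨s, hs, n, hx', by rwa [neg_neg]⟩

variable {S : AddSubgroup K} {c : K}

theorem le_oIdealAdjoin (hS : IsOIdeal K S) : S ≤ oIdealAdjoin S c := by
  intro x hx
  obtain ⟨t, ht, hxt, hxt'⟩ := hS.1 x hx (-x) (S.neg_mem hx)
  exact ⟨t, ht, 0, by simpa using hxt, by simpa using hxt'⟩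

theorem mem_oIdealAdjoin_self (hc : 0 ≤ c) : c ∈ oIdealAdjoin S c :=
  ⟨0, S.zero_mem, 1, by simp, by simpa using neg_le_self hc⟩

theorem isOIdeal_oIdealAdjoin (hS : IsOIdeal K S) (hc : 0 ≤ c) :
    IsOIdeal K (oIdealAdjoin S c) := by
  have mono : ∀ {s t : K} {m n : ℕ}, s ≤ t → m ≤ n → s + m • c ≤ t + n • c :=
    fun hst hmn => add_le_add hst (nsmul_le_nsmul_left hc hmn)
  refine ⟨?_, ?_⟩
  · rintro x ⟨s₁, hs₁, n₁, hx, -⟩ y ⟨s₂, hs₂, n₂, hy, -⟩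
    obtain ⟨t, ht, ht_ub⟩ := hS.exists_upperBound (toFinite {0, s₁, s₂})
      (by simp [insert_subset_iff, S.zero_mem, hs₁, hs₂])
    simp only [upperBounds_insert, upperBounds_singleton, mem_inter_iff, mem_Ici] at ht_ub
    obtain ⟨ht₀, le₁, le₂⟩ := ht_ub
    have hb : 0 ≤ t + (n₁ + n₂) • c := add_nonneg ht₀ (nsmul_nonneg hc _)
    exact ⟨t + (n₁ + n₂) • c, ⟨t, ht, n₁ + n₂, le_rfl, (neg_nonpos.2 hb).trans hb⟩,
      hx.trans (mono le₁ (Nat.le_add_right _ _)), hy.trans (mono le₂ (Nat.le_add_left _ _))⟩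
  · rintro x ⟨s₁, hs₁, n₁, -, hx'⟩ y ⟨s₂, hs₂, n₂, hy, -⟩ z hxz hzy
    obtain ⟨t, ht, le₁, le₂⟩ := hS.1 s₁ hs₁ s₂ hs₂
    exact ⟨t, ht, n₁ + n₂, hzy.trans (hy.trans (mono le₂ (Nat.le_add_left _ _))),
      (neg_le_neg hxz).trans (hx'.trans (mono le₁ (Nat.le_add_right _ _)))⟩

end OIdeal

namespace QuotientAddGroup

variable {K : Type*} [AddCommGroup K] [PartialOrder K] [IsOrderedAddMonoid K]
variable (S : AddSubgroup K) [hS : Fact (IsOIdeal K S)]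

def nonnegCone : AddGroupCone (K ⧸ S) where
  toAddSubmonoid := (AddSubmonoid.nonneg K).map (mk' S)
  eq_zero_of_mem_of_neg_mem' := by
    rintro _ ⟨a, ha, rfl⟩ ⟨b, hb, hab⟩
    -- `0 ≤ a ≤ a + b ∈ S`, so `a ∈ S` by convexity
    have hab : a + b ∈ S := by
      rw [← eq_zero_iff, mk_add, show (b : K ⧸ S) = -a from hab, add_neg_cancel]
    exact (eq_zero_iff a).2 (hS.out.2 0 S.zero_mem _ hab a ha (le_add_of_nonneg_right hb))

instance : PartialOrder (K ⧸ S) := .mkOfAddGroupCone (nonnegCone S)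

instance : IsOrderedAddMonoid (K ⧸ S) := .mkOfCone (nonnegCone S)

variable {S}

theorem mk_le_mk_iff {a b : K} : (a : K ⧸ S) ≤ b ↔ ∃ s ∈ S, a ≤ b + s := by
  change (b : K ⧸ S) - a ∈ (AddSubmonoid.nonneg K).map (mk' S) ↔ _
  simp_rw [AddSubmonoid.mem_map, AddSubmonoid.mem_nonneg, mk'_apply, ← mk_sub, eq_iff_sub_mem]
  constructor
  · rintro ⟨x, hx, hxS⟩
    exact ⟨_, hxS, by
      rw [show b + (x - (b - a)) = a + x by abel]; exact le_add_of_nonneg_right hx⟩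
  · rintro ⟨s, hs, hab⟩
    exact ⟨b + s - a, sub_nonneg.2 hab, by rwa [show b + s - a - (b - a) = s by abel]⟩

theorem exists_nonneg_mk_eq {x : K ⧸ S} (hx : 0 ≤ x) : ∃ a : K, 0 ≤ a ∧ (a : K ⧸ S) = x := by
  obtain ⟨a, rfl⟩ := mk_surjective x
  obtain ⟨s, hs, has⟩ := mk_le_mk_iff.1 (mk_zero S ▸ hx)
  exact ⟨a + s, has, eq_iff_sub_mem.2 (by simpa using hs)⟩

theorem mk_le_mk {a b : K} (h : a ≤ b) : (a : K ⧸ S) ≤ b :=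
  mk_le_mk_iff.2 ⟨0, S.zero_mem, by rwa [add_zero]⟩

protected theorem _root_.RieszInterpolation.quotient (hK : RieszInterpolation K) :
    RieszInterpolation (K ⧸ S) := by
  intro x₁ x₂ y₁ y₂ h₁₁ h₁₂ h₂₁ h₂₂
  obtain ⟨a₁, rfl⟩ := mk_surjective x₁
  obtain ⟨a₂, rfl⟩ := mk_surjective x₂
  obtain ⟨b₁, rfl⟩ := mk_surjective y₁
  obtain ⟨b₂, rfl⟩ := mk_surjective y₂
  obtain ⟨s₁₁, hs₁₁, h₁₁⟩ := mk_le_mk_iff.1 h₁₁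
  obtain ⟨s₁₂, hs₁₂, h₁₂⟩ := mk_le_mk_iff.1 h₁₂
  obtain ⟨s₂₁, hs₂₁, h₂₁⟩ := mk_le_mk_iff.1 h₂₁
  obtain ⟨s₂₂, hs₂₂, h₂₂⟩ := mk_le_mk_iff.1 h₂₂
  obtain ⟨s, hs, hs_ub⟩ := hS.out.exists_upperBound (toFinite {s₁₁, s₁₂, s₂₁, s₂₂})
    (by simp [insert_subset_iff, hs₁₁, hs₁₂, hs₂₁, hs₂₂])
  simp only [upperBounds_insert, upperBounds_singleton, mem_inter_iff, mem_Ici] at hs_ub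
  obtain ⟨le₁₁, le₁₂, le₂₁, le₂₂⟩ := hs_ub
  obtain ⟨c, hc₁, hc₂, hc₁', hc₂'⟩ := hK a₁ a₂ (b₁ + s) (b₂ + s)
    (h₁₁.trans (by gcongr)) (h₁₂.trans (by gcongr)) (h₂₁.trans (by gcongr))
    (h₂₂.trans (by gcongr))
  exact ⟨c, mk_le_mk hc₁, mk_le_mk hc₂, mk_le_mk_iff.2 ⟨s, hs, hc₁'⟩,
    mk_le_mk_iff.2 ⟨s, hs, hc₂'⟩⟩

theorem isStrongUnit_mk {v : K} (hv : IsStrongUnit v) : IsStrongUnit (v : K ⧸ S) := by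
  refine ⟨mk_zero S ▸ mk_le_mk hv.1, fun x => ?_⟩
  obtain ⟨a, rfl⟩ := mk_surjective x
  obtain ⟨n, hn⟩ := hv.2 a
  exact ⟨n, mk_nsmul S v n ▸ mk_le_mk hn⟩

theorem exists_mem_Icc_mk_eq (hK : RieszInterpolation K) {v : K} (hv : 0 ≤ v) {x : K ⧸ S}
    (hx : x ∈ Icc 0 (v : K ⧸ S)) : ∃ a ∈ Icc 0 v, (a : K ⧸ S) = x := by
  obtain ⟨y, rfl⟩ := mk_surjective x
  obtain ⟨s₁, hs₁, hy₀⟩ := mk_le_mk_iff.1 (mk_zero S ▸ hx.1)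
  obtain ⟨s₂, hs₂, hyv⟩ := mk_le_mk_iff.1 hx.2
  obtain ⟨s, hs, hs_ub⟩ := hS.out.exists_upperBound (toFinite {0, s₁, s₂})
    (by simp [insert_subset_iff, S.zero_mem, hs₁, hs₂])
  simp only [upperBounds_insert, upperBounds_singleton, mem_inter_iff, mem_Ici] at hs_ub
  obtain ⟨hs₀, le₁, le₂⟩ := hs_ub
  obtain ⟨a, ha₀, hya, hav, hay⟩ := hK 0 (y - s) v (y + s) hv (hy₀.trans (by gcongr))
    (sub_le_iff_le_add.2 (hyv.trans (by gcongr)))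
    ((sub_le_self y hs₀).trans (le_add_of_nonneg_right hs₀))
  refine ⟨a, ⟨ha₀, hav⟩, eq_iff_sub_mem.2 (hS.out.2 (-s) (S.neg_mem hs) s hs _ ?_ ?_)⟩
  · exact le_sub_iff_add_le.2 (by rwa [neg_add_eq_sub])
  · exact sub_le_iff_le_add.2 (hay.trans_eq (add_comm y s))

end QuotientAddGroup

section Value

variable {K : Type*} [AddCommGroup K] [PartialOrder K] [IsOrderedAddMonoid K]

def IsValue (w : K) (S : AddSubgroup K) : Prop :=
  Maximal (fun T : AddSubgroup K => IsOIdeal K T ∧ Disjoint (T : Set K) (Ici w)) S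

theorem exists_isValue {w : K} (hw : ¬ w ≤ 0) : ∃ S, IsValue w S := by
  refine (zorn_le_nonempty₀ {T | IsOIdeal K T ∧ Disjoint (T : Set K) (Ici w)} ?_ ⊥
    ⟨isOIdeal_bot, by simpa using hw⟩).imp fun _ h => h.2
  intro c hc hchain T hT
  refine ⟨sSup c, ⟨isOIdeal_sSup_of_isChain (fun S hS => (hc hS).1) hchain ⟨T, hT⟩,
    Set.disjoint_left.2 fun x hx => ?_⟩, fun S hS => le_sSup hS⟩
  obtain ⟨S, hS, hxS, -⟩ := hchain.exists_mem_mem_of_mem_sSup ⟨T, hT⟩ hx hx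
  exact Set.disjoint_left.1 (hc hS).2 hxS

namespace IsValue

variable {w : K} {S : AddSubgroup K}

theorem exists_le_add_nsmul (hS : IsValue w S) {c : K} (hc : 0 ≤ c) (hcS : c ∉ S) :
    ∃ s ∈ S, ∃ n : ℕ, w ≤ s + n • c := by
  by_contra! h
  have hdisj : Disjoint (oIdealAdjoin S c : Set K) (Ici w) :=
    Set.disjoint_left.2 fun x ⟨s, hs, n, hx, _⟩ hwx => h s hs n (hwx.trans hx)
  exact hcS (hS.2 ⟨isOIdeal_oIdealAdjoin hS.1.1 hc, hdisj⟩ (le_oIdealAdjoin hS.1.1)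
    (mem_oIdealAdjoin_self hc))

variable [Fact (IsOIdeal K S)]

theorem not_mk_le_zero (hS : IsValue w S) : ¬ (w : K ⧸ S) ≤ 0 := by
  rw [← QuotientAddGroup.mk_zero S, QuotientAddGroup.mk_le_mk_iff]
  rintro ⟨s, hs, hws⟩
  exact Set.disjoint_left.1 hS.1.2 hs (by simpa using hws)

theorem exists_mk_le_nsmul (hS : IsValue w S) {x : K ⧸ S} (hx₀ : 0 ≤ x) (hx : x ≠ 0) :
    ∃ n : ℕ, (w : K ⧸ S) ≤ n • x := by
  obtain ⟨a, ha, rfl⟩ := QuotientAddGroup.exists_nonneg_mk_eq hx₀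
  obtain ⟨s, hs, n, hwn⟩ :=
    hS.exists_le_add_nsmul ha fun haS => hx ((QuotientAddGroup.eq_zero_iff a).2 haS)
  exact ⟨n, QuotientAddGroup.mk_nsmul S a n ▸
    QuotientAddGroup.mk_le_mk_iff.2 ⟨s, hs, hwn.trans_eq (add_comm s _)⟩⟩

theorem eq_zero_or_eq_zero_of_isGLB (hS : IsValue w S) {p q : K ⧸ S} (h : IsGLB {p, q} 0) :
    p = 0 ∨ q = 0 := by
  by_contra! ⟨hp, hq⟩
  obtain ⟨hp₀, hq₀, -⟩ := isGLB_pair_iff.1 h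
  obtain ⟨m, hm⟩ := hS.exists_mk_le_nsmul hp₀ hp
  obtain ⟨n, hn⟩ := hS.exists_mk_le_nsmul hq₀ hq
  -- `w/S` would be a lower bound of `(m + n) • p` and `(m + n) • q`, whose infimum is `0`
  refine hS.not_mk_le_zero ((isGLB_pair_iff.1 (h.nsmul (m + n))).2.2 _ ?_ ?_)
  · exact hm.trans (nsmul_le_nsmul_left hp₀ (Nat.le_add_right m n))
  · exact hn.trans (nsmul_le_nsmul_left hq₀ (Nat.le_add_left n m))

theorem isAntilattice_Icc_lex_punit (hS : IsValue w S) (hK : RieszInterpolation K) (v : K ⧸ S) :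
    IsAntilattice (Icc (0 : (K ⧸ S) ×ₗ PUnit) (toLex (v, 0))) :=
  .of_orderIso ((Prod.Lex.prodUnique (K ⧸ S) PUnit).restrictIcc 0 (toLex (v, 0))) <|
    isAntilattice_Icc (hK.quotient)
      (fun _ _ => hS.eq_zero_or_eq_zero_of_isGLB) v

end IsValue

end Value

universe u

def IsLexAntilatticeSubdirectProduct {K : Type u} [AddCommGroup K] [PartialOrder K]
    [IsOrderedAddMonoid K] (v : K) : Prop :=
  ∃ (ι : Type u) (Hf Gf : ι → Type u)
      (_ : ∀ i, AddCommGroup (Hf i)) (_ : ∀ i, PartialOrder (Hf i))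
      (_ : ∀ i, IsOrderedAddMonoid (Hf i))
      (_ : ∀ i, AddCommGroup (Gf i)) (_ : ∀ i, PartialOrder (Gf i))
      (_ : ∀ i, IsOrderedAddMonoid (Gf i))
      (uf : ∀ i, Hf i),
      (∀ i, IsStrongUnit (uf i) ∧ RDP (Hf i) ∧ IsDirectedGroup (Gf i) ∧ RDP (Gf i) ∧
        IsAntilattice ↥(Icc (0 : (Hf i) ×ₗ (Gf i)) (toLex (uf i, (0 : Gf i))))) ∧
      ∃ Φ : K → ∀ i, (Hf i) ×ₗ (Gf i),
        (∀ a ∈ Icc (0 : K) v, ∀ i, Φ a i ∈ Icc (0 : (Hf i) ×ₗ (Gf i)) (toLex (uf i, (0 : Gf i)))) ∧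
        (∀ a ∈ Icc (0 : K) v, ∀ b ∈ Icc (0 : K) v, Φ a = Φ b → a = b) ∧
        (∀ a ∈ Icc (0 : K) v, ∀ b ∈ Icc (0 : K) v, ((∀ i, Φ a i ≤ Φ b i) ↔ a ≤ b)) ∧
        (∀ i, Φ v i = toLex (uf i, (0 : Gf i))) ∧
        (∀ a ∈ Icc (0 : K) v, ∀ b ∈ Icc (0 : K) v, a + b ≤ v → ∀ i, Φ (a + b) i = Φ a i + Φ b i) ∧
        (∀ i, ∀ q ∈ Icc (0 : (Hf i) ×ₗ (Gf i)) (toLex (uf i, (0 : Gf i))),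
          ∃ a ∈ Icc (0 : K) v, Φ a i = q)

section Subdirect

variable {K : Type u} [AddCommGroup K] [PartialOrder K] [IsOrderedAddMonoid K]

theorem isLexAntilatticeSubdirectProduct_zero : IsLexAntilatticeSubdirectProduct (0 : K) := by
  have eq_zero : ∀ a ∈ Icc (0 : K) 0, a = 0 := fun a ha => le_antisymm ha.2 ha.1
  refine ⟨PEmpty, fun _ => PUnit, fun _ => PUnit, fun _ => inferInstance, fun _ => inferInstance,
    fun _ => inferInstance, fun _ => inferInstance, fun _ => inferInstance, fun _ => inferInstance,
    fun _ => 0, fun i => i.elim, fun _ i => i.elim, fun _ _ i => i.elim, fun a ha b hb _ => ?_,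
    fun a ha b hb => ?_, fun i => i.elim, fun _ _ _ _ _ i => i.elim, fun i => i.elim⟩
  · rw [eq_zero a ha, eq_zero b hb]
  · simp [eq_zero a ha, eq_zero b hb]

theorem RieszInterpolation.isLexAntilatticeSubdirectProduct (hK : RieszInterpolation K) {v : K}
    (hv : IsStrongUnit v) : IsLexAntilatticeSubdirectProduct v := by
  choose S hS using fun w : {w : K // ¬ w ≤ 0} => exists_isValue w.2
  have (w : {w : K // ¬ w ≤ 0}) : Fact (IsOIdeal K (S w)) := ⟨(hS w).1.1⟩
  let e (w : {w : K // ¬ w ≤ 0}) := (Prod.Lex.prodUnique (K ⧸ S w) PUnit.{u + 1}).symm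
  have le_iff (a b : K) : (∀ w, e w a ≤ e w b) ↔ a ≤ b := by
    refine ⟨fun h => by_contra fun hab => ?_,
      fun h w => (e w).le_iff_le.2 (QuotientAddGroup.mk_le_mk h)⟩
    have hw : ¬ a - b ≤ 0 := fun h => hab (sub_nonpos.1 h)
    refine (hS ⟨a - b, hw⟩).not_mk_le_zero ?_
    rw [QuotientAddGroup.mk_sub, sub_nonpos]
    exact (e _).le_iff_le.1 (h ⟨a - b, hw⟩)
  refine ⟨{w : K // ¬ w ≤ 0}, fun w => K ⧸ S w, fun _ => PUnit, fun _ => inferInstance,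
    fun _ => inferInstance, fun _ => inferInstance, fun _ => inferInstance, fun _ => inferInstance,
    fun _ => inferInstance, fun w => (v : K ⧸ S w), fun w => ?_, fun a w => e w a, ?_, ?_, ?_,
    fun _ => rfl, ?_, ?_⟩
  · have rieszInterpolation_punit : RieszInterpolation PUnit.{u + 1} :=
      fun _ _ _ _ _ _ _ _ => ⟨0, le_rfl, le_rfl, le_rfl, le_rfl⟩
    exact ⟨QuotientAddGroup.isStrongUnit_mk hv, hK.quotient.rdp, fun _ _ => ⟨0, le_rfl, le_rfl⟩,
      rieszInterpolation_punit.rdp, (hS w).isAntilattice_Icc_lex_punit hK _⟩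
  · exact fun a ha w => ⟨(e w).monotone (QuotientAddGroup.mk_le_mk ha.1),
      (e w).monotone (QuotientAddGroup.mk_le_mk ha.2)⟩
  · exact fun a _ b _ h => le_antisymm ((le_iff a b).1 fun w => (congrFun h w).le)
      ((le_iff b a).1 fun w => (congrFun h w).ge)
  · exact fun a _ b _ => le_iff a b
  · exact fun a _ b _ _ w => rfl
  · intro w q hq
    obtain ⟨a, ha, hax⟩ := QuotientAddGroup.exists_mem_Icc_mk_eq hK hv.1
      ⟨(e w).symm.monotone hq.1, (e w).symm.monotone hq.2⟩
    exact ⟨a, ha, by simp [hax]⟩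

end Subdirect

universe x y

/-- `E = Γ(H ×ₗ G, (u, 0))` is a subdirect product of a family of
antilattice interval effect algebras of the form `Γ(H_i ×ₗ G_i, (u_i, 0))`. -/
theorem lex_subdirect_product_of_antilattices {H : Type x} {G : Type y}
    [AddCommGroup H] [PartialOrder H] [IsOrderedAddMonoid H]
    [AddCommGroup G] [PartialOrder G] [IsOrderedAddMonoid G]
    (u : H) (hu : IsStrongUnit u) (hH : RDP H) (hG : IsDirectedGroup G) (hRG : RDP G) :
    ∃ (ι : Type (max x y)) (Hf Gf : ι → Type (max x y))
      (_ : ∀ i, AddCommGroup (Hf i)) (_ : ∀ i, PartialOrder (Hf i)) (_ : ∀ i, IsOrderedAddMonoid (Hf i))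
        (_ : ∀ i, AddCommGroup (Gf i)) (_ : ∀ i, PartialOrder (Gf i)) (_ : ∀ i, IsOrderedAddMonoid (Gf i))
      (uf : ∀ i, Hf i),
      (∀ i, IsStrongUnit (uf i) ∧ RDP (Hf i) ∧ IsDirectedGroup (Gf i) ∧ RDP (Gf i) ∧
        IsAntilattice ↥(Icc (0 : (Hf i) ×ₗ (Gf i)) (toLex (uf i, (0 : Gf i))))) ∧
      ∃ Φ : H ×ₗ G → ∀ i, (Hf i) ×ₗ (Gf i),
        (∀ a ∈ Icc (0 : H ×ₗ G) (toLex (u, (0 : G))),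
          ∀ i, Φ a i ∈ Icc (0 : (Hf i) ×ₗ (Gf i)) (toLex (uf i, (0 : Gf i)))) ∧
        (∀ a ∈ Icc (0 : H ×ₗ G) (toLex (u, (0 : G))),
          ∀ b ∈ Icc (0 : H ×ₗ G) (toLex (u, (0 : G))), Φ a = Φ b → a = b) ∧
        (∀ a ∈ Icc (0 : H ×ₗ G) (toLex (u, (0 : G))),
          ∀ b ∈ Icc (0 : H ×ₗ G) (toLex (u, (0 : G))),
            ((∀ i, Φ a i ≤ Φ b i) ↔ a ≤ b)) ∧
        (∀ i, Φ (toLex (u, (0 : G))) i = toLex (uf i, (0 : Gf i))) ∧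
        (∀ a ∈ Icc (0 : H ×ₗ G) (toLex (u, (0 : G))),
          ∀ b ∈ Icc (0 : H ×ₗ G) (toLex (u, (0 : G))), a + b ≤ toLex (u, (0 : G)) →
            ∀ i, Φ (a + b) i = Φ a i + Φ b i) ∧
        (∀ i, ∀ q ∈ Icc (0 : (Hf i) ×ₗ (Gf i)) (toLex (uf i, (0 : Gf i))),
          ∃ a ∈ Icc (0 : H ×ₗ G) (toLex (u, (0 : G))), Φ a i = q) := by
  by_cases hu₀ : u = 0
  · subst hu₀
    exact isLexAntilatticeSubdirectProduct_zero
  · have := hG.isDirectedOrder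
    have := hG.isCodirectedOrder
    exact (hH.rieszInterpolation.lex hRG.rieszInterpolation).isLexAntilatticeSubdirectProduct
      (hu.toLex hu₀)
end
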